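/- Let the translates of f be orthonormal (so Σ_z |c_{h+Mᵀz}(f)|² = 1/m for all h ∈ G(Mᵀ)) and C⁰ elliptic with constants 0 < l ≤ u. Then the periodised Green operator Γᵖ C⁰, defined on Sym_d(V_M^f) as the Fourier multiplier with matrix Γ̂ᵖ_h = m Σ_{z∈ℤ^d} Γ̂⁰_{h+Mᵀz} |c_{h+Mᵀz}(f)|² on the h-th block, is bounded: ‖ΓᵖC⁰ : γ‖²_{L²} ≤ (u/l) ‖γ‖²_{L²} for all γ ∈ Sym_d(V_M^f). -/

import Mathlib

/-- The generating set `G(Mᵀ) = {h ∈ ℤ^d : M⁻ᵀ h ∈ [-1/2,1/2)^d}`. -/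
def genSet (d : ℕ) (M : Matrix (Fin d) (Fin d) ℤ) : Set (Fin d → ℤ) :=
  {h | ∀ i, (((M.map (Int.cast : ℤ → ℝ)).transpose)⁻¹.mulVec fun j => (h j : ℝ)) i ∈
        Set.Ico (-(1/2) : ℝ) (1/2)}

/-- Squared Frobenius norm of a complex matrix. -/
noncomputable def frobSq (d : ℕ) (σ : Matrix (Fin d) (Fin d) ℂ) : ℝ :=
  ∑ p, ∑ q, ‖σ p q‖ ^ 2

/-- The linear equivalence between matrices and Euclidean space carrying
the Frobenius norm. -/
noncomputable def matEquiv (d : ℕ) :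
    Matrix (Fin d) (Fin d) ℂ ≃ₗ[ℂ] EuclideanSpace ℂ (Fin d × Fin d) where
  toFun := fun σ => (WithLp.equiv 2 _).symm (fun p => σ p.1 p.2)
  invFun := fun x => Matrix.of fun p q => (WithLp.equiv 2 _) x (p, q)
  map_add' := fun _ _ => rfl
  map_smul' := fun _ _ => rfl
  left_inv := fun _ => rfl
  right_inv := fun _ => rfl

lemma frobSq_nonneg (d : ℕ) (σ : Matrix (Fin d) (Fin d) ℂ) : 0 ≤ frobSq d σ := by
  unfold frobSq
  positivity

lemma frobSq_eq (d : ℕ) (σ : Matrix (Fin d) (Fin d) ℂ) :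
    frobSq d σ = ‖matEquiv d σ‖ ^ 2 := by
  rw [EuclideanSpace.norm_eq, Real.sq_sqrt (by positivity), Fintype.sum_prod_type]
  unfold frobSq
  simp [matEquiv]

lemma genSet_finite (d : ℕ) (M : Matrix (Fin d) (Fin d) ℤ) (hM : M.det ≠ 0) :
    (genSet d M).Finite := by
  set N : Matrix (Fin d) (Fin d) ℝ := (M.map (Int.cast : ℤ → ℝ)).transpose with hN
  have hdet : IsUnit N.det := by
    rw [hN, Matrix.det_transpose,
      show (M.map (Int.cast : ℤ → ℝ)).det = ((M.det : ℤ) : ℝ) from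
        (RingHom.map_det (Int.castRingHom ℝ) M).symm]
    exact isUnit_iff_ne_zero.mpr (by exact_mod_cast hM)
  set b : Fin d → ℤ := fun i => ⌈∑ j, |N i j| / 2⌉ with hb
  apply Set.Finite.subset (Set.Finite.pi (fun i => Set.finite_Icc (-(b i)) (b i)))
  intro h hh
  simp only [Set.mem_pi, Set.mem_univ, forall_true_left, Set.mem_Icc]
  intro i
  set y : Fin d → ℝ := N⁻¹.mulVec (fun j => (h j : ℝ)) with hy
  have hyb : ∀ j, |y j| ≤ 1 / 2 := by
    intro j
    have := hh j
    rw [Set.mem_Ico] at this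
    exact abs_le.mpr ⟨this.1, le_of_lt this.2⟩
  have heq : N.mulVec y = fun j => (h j : ℝ) := by
    rw [hy, Matrix.mulVec_mulVec, Matrix.mul_nonsing_inv N hdet, Matrix.one_mulVec]
  have hiv : (h i : ℝ) = ∑ j, N i j * y j := by
    have := congrFun heq i
    simpa [Matrix.mulVec, dotProduct] using this.symm
  have habs : |(h i : ℝ)| ≤ (b i : ℝ) := by
    rw [hiv]
    calc |∑ j, N i j * y j| ≤ ∑ j, |N i j * y j| := Finset.abs_sum_le_sum_abs _ _
      _ ≤ ∑ j, |N i j| / 2 := by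
          apply Finset.sum_le_sum
          intro j _
          rw [abs_mul]
          calc |N i j| * |y j| ≤ |N i j| * (1 / 2) :=
                mul_le_mul_of_nonneg_left (hyb j) (abs_nonneg _)
            _ = |N i j| / 2 := by ring
      _ ≤ (b i : ℝ) := Int.le_ceil _
  exact abs_le.mp (by exact_mod_cast habs)

/-- Key convexity bound: a convex combination (total mass `1/m`, rescaled by `m`)
of vectors of norm `≤ K` has norm `≤ K`. -/
lemma convex_bound (d : ℕ) {ι : Type} (a : ι → ℝ) (ha : ∀ w, 0 ≤ a w)
    (hs : Summable a) (m : ℝ) (hm : 0 < m) (hsum : ∑' w, a w = 1 / m)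
    (X : ι → Matrix (Fin d) (Fin d) ℂ) (K : ℝ)
    (hK : 0 ≤ K) (hX : ∀ w, ‖matEquiv d (X w)‖ ≤ K) :
    ‖matEquiv d (m • ∑' w, a w • X w)‖ ≤ K := by
  have hsmul : ∀ (r : ℝ) (x : Matrix (Fin d) (Fin d) ℂ),
      matEquiv d (r • x) = r • matEquiv d x := by
    intro r x
    rw [← smul_one_smul ℂ r x, map_smul, smul_one_smul]
  set E := (matEquiv d).toContinuousLinearEquiv with hE
  have hEeq : ∀ x, E x = matEquiv d x := fun x => rfl
  set v : ι → EuclideanSpace ℂ (Fin d × Fin d) :=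
    fun w => a w • matEquiv d (X w) with hv
  have hvn : ∀ w, ‖v w‖ ≤ a w * K := by
    intro w
    rw [hv]
    simp only
    rw [norm_smul, Real.norm_eq_abs, abs_of_nonneg (ha w)]
    exact mul_le_mul_of_nonneg_left (hX w) (ha w)
  have hsK : Summable (fun w => a w * K) := hs.mul_right K
  have hsv : Summable v := Summable.of_norm_bounded hsK hvn
  have hEs : HasSum (fun w => a w • X w) (E.symm (∑' w, v w)) := by
    have h1 : HasSum (fun w => E (a w • X w)) (∑' w, v w) := by
      have heq2 : (fun w => E (a w • X w)) = v := by
        funext w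
        rw [hEeq, hsmul, hv]
      rw [heq2]
      exact hsv.hasSum
    exact E.hasSum.mp h1
  have ht : (∑' w, a w • X w) = E.symm (∑' w, v w) := hEs.tsum_eq
  have hmain : matEquiv d (m • ∑' w, a w • X w) = m • ∑' w, v w := by
    rw [ht, hsmul, ← hEeq, ContinuousLinearEquiv.apply_symm_apply]
  rw [hmain, norm_smul, Real.norm_eq_abs, abs_of_pos hm]
  have hnsum : Summable (fun w => ‖v w‖) :=
    Summable.of_nonneg_of_le (fun w => norm_nonneg _) hvn hsK
  have h2 : ‖∑' w, v w‖ ≤ (1 / m) * K := by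
    calc ‖∑' w, v w‖ ≤ ∑' w, ‖v w‖ := norm_tsum_le_tsum_norm hnsum
      _ ≤ ∑' w, a w * K := Summable.tsum_le_tsum hvn hnsum hsK
      _ = (∑' w, a w) * K := tsum_mul_right
      _ = (1 / m) * K := by rw [hsum]
  calc m * ‖∑' w, v w‖ ≤ m * ((1 / m) * K) :=
        mul_le_mul_of_nonneg_left h2 (le_of_lt hm)
    _ = K := by field_simp

/-- let the translates of `f` be orthonormal
(`Σ_z |c_{h+Mᵀz}(f)|² = 1/m`) and `C⁰` elliptic with constants `0 < l ≤ u`, so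
that the Green symbols satisfy `‖Γ̂⁰_k C⁰ ε‖² ≤ (u/l)‖ε‖²`.  Then the periodised
Green operator `Γᵖ C⁰`, the Fourier multiplier acting on a field
`γ ∈ Sym_d(V_M^f)` with coefficients `c_{h+Mᵀz}(γ) = Ĝ_h c_{h+Mᵀz}(f)` through
the blocks `Γ̂ᵖ_h = m Σ_z Γ̂⁰_{h+Mᵀz} |c_{h+Mᵀz}(f)|²`, is bounded:
`‖Γᵖ C⁰ : γ‖²_{L²} ≤ (u/l) ‖γ‖²_{L²}`, both `L²`-norms computed via Parseval. -/
theorem periodised_green_bounded (d : ℕ) (M : Matrix (Fin d) (Fin d) ℤ)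
    (hM : M.det ≠ 0)
    (c : (Fin d → ℤ) → ℂ)
    (hsq : ∀ h : Fin d → ℤ,
      Summable fun z : Fin d → ℤ => ‖c (h + M.transpose.mulVec z)‖ ^ 2)
    -- orthonormality of the translates of `f`
    (horth : ∀ h ∈ genSet d M,
      ∑' z : Fin d → ℤ, ‖c (h + M.transpose.mulVec z)‖ ^ 2 =
        1 / (M.det.natAbs : ℝ))
    (l u : ℝ) (hl : 0 < l) (hlu : l ≤ u)
    (C0 : Matrix (Fin d) (Fin d) ℂ →ₗ[ℂ] Matrix (Fin d) (Fin d) ℂ)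
    (Γ0 : (Fin d → ℤ) → Matrix (Fin d) (Fin d) ℂ →ₗ[ℂ] Matrix (Fin d) (Fin d) ℂ)
    -- the Green symbols are uniformly bounded: `‖Γ̂⁰_k C⁰ ε‖² ≤ (u/l)‖ε‖²`
    (hbound : ∀ k : Fin d → ℤ, ∀ ε : Matrix (Fin d) (Fin d) ℂ,
      frobSq d (Γ0 k (C0 ε)) ≤ (u / l) * frobSq d ε)
    -- the Fourier data `Ĝ_h` of a field `γ ∈ Sym_d(V_M^f)`
    (G : (Fin d → ℤ) → Matrix (Fin d) (Fin d) ℂ) :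
    ∑' h : genSet d M, ∑' z : Fin d → ℤ,
        ‖c ((h : Fin d → ℤ) + M.transpose.mulVec z)‖ ^ 2 *
          frobSq d ((M.det.natAbs : ℝ) •
            ∑' w : Fin d → ℤ,
              ‖c ((h : Fin d → ℤ) + M.transpose.mulVec w)‖ ^ 2 •
                Γ0 ((h : Fin d → ℤ) + M.transpose.mulVec w) (C0 (G h))) ≤
      (u / l) * ∑' h : genSet d M, ∑' z : Fin d → ℤ,
        ‖c ((h : Fin d → ℤ) + M.transpose.mulVec z)‖ ^ 2 *
          frobSq d (G h) := by
  haveI : Finite (genSet d M) := (genSet_finite d M hM).to_subtype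
  have hm : (0 : ℝ) < (M.det.natAbs : ℝ) := by
    have : M.det.natAbs ≠ 0 := Int.natAbs_ne_zero.mpr hM
    positivity
  have hul : (0 : ℝ) ≤ u / l := div_nonneg (le_trans (le_of_lt hl) hlu) (le_of_lt hl)
  set m : ℝ := (M.det.natAbs : ℝ)
  -- pointwise bound over each h
  have key : ∀ h : genSet d M,
      (∑' z : Fin d → ℤ,
        ‖c ((h : Fin d → ℤ) + M.transpose.mulVec z)‖ ^ 2 *
          frobSq d (m •
            ∑' w : Fin d → ℤ,
              ‖c ((h : Fin d → ℤ) + M.transpose.mulVec w)‖ ^ 2 •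
                Γ0 ((h : Fin d → ℤ) + M.transpose.mulVec w) (C0 (G h)))) ≤
      (u / l) * ∑' z : Fin d → ℤ,
        ‖c ((h : Fin d → ℤ) + M.transpose.mulVec z)‖ ^ 2 *
          frobSq d (G h) := by
    intro h
    set a : (Fin d → ℤ) → ℝ :=
      fun z => ‖c ((h : Fin d → ℤ) + M.transpose.mulVec z)‖ ^ 2 with ha
    have ha0 : ∀ z, 0 ≤ a z := fun z => by positivity
    have hasum : Summable a := hsq _
    have hatsum : ∑' z, a z = 1 / m := horth _ h.2
    set T : Matrix (Fin d) (Fin d) ℂ :=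
      m • ∑' w : Fin d → ℤ, a w •
        Γ0 ((h : Fin d → ℤ) + M.transpose.mulVec w) (C0 (G h)) with hT
    set K : ℝ := Real.sqrt ((u / l) * frobSq d (G h)) with hK
    have hXb : ∀ w : Fin d → ℤ,
        ‖matEquiv d (Γ0 ((h : Fin d → ℤ) + M.transpose.mulVec w) (C0 (G h)))‖ ≤ K := by
      intro w
      have h1 := hbound ((h : Fin d → ℤ) + M.transpose.mulVec w) (G h)
      rw [frobSq_eq] at h1
      rw [show ‖matEquiv d (Γ0 ((h : Fin d → ℤ) + M.transpose.mulVec w) (C0 (G h)))‖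
          = Real.sqrt (‖matEquiv d (Γ0 ((h : Fin d → ℤ) + M.transpose.mulVec w) (C0 (G h)))‖ ^ 2)
          from (Real.sqrt_sq (norm_nonneg _)).symm, hK]
      exact Real.sqrt_le_sqrt h1
    have hTb : ‖matEquiv d T‖ ≤ K :=
      convex_bound d a ha0 hasum m hm hatsum _ K (Real.sqrt_nonneg _) hXb
    have hfT : frobSq d T ≤ (u / l) * frobSq d (G h) := by
      rw [frobSq_eq]
      calc ‖matEquiv d T‖ ^ 2 ≤ K ^ 2 := by
            apply pow_le_pow_left₀ (norm_nonneg _) hTb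
        _ = (u / l) * frobSq d (G h) := by
            rw [hK, Real.sq_sqrt (mul_nonneg hul (frobSq_nonneg d (G h)))]
    show (∑' z, a z * frobSq d T) ≤ (u / l) * ∑' z, a z * frobSq d (G (h : Fin d → ℤ))
    calc ∑' z, a z * frobSq d T = (∑' z, a z) * frobSq d T := tsum_mul_right
      _ = (1 / m) * frobSq d T := by rw [hatsum]
      _ ≤ (1 / m) * ((u / l) * frobSq d (G h)) := by
          apply mul_le_mul_of_nonneg_left hfT (by positivity)
      _ = (u / l) * ((1 / m) * frobSq d (G h)) := by ring
      _ = (u / l) * ((∑' z, a z) * frobSq d (G h)) := by rw [hatsum]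
      _ = (u / l) * ∑' z, a z * frobSq d (G h) := by rw [tsum_mul_right]
  refine le_trans (Summable.tsum_le_tsum key Summable.of_finite Summable.of_finite) ?_
  exact le_of_eq tsum_mul_left
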